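/- Let α ∈ (1/2,1), L = ((α+1)/(2α))·log 2, j ≥ 1 and k ≥ 0 an integer. If (x,h) and (x',h') both lie in the open box B_{j,k} = (2^{j-1}k, 2^{j-1}(k+1)) × (jL, (j+1)L), then |x − x'| ≤ e^{(h+h')/2}. In particular, every box B_{j,k} induces a clique in the hyperbolic random graph adjacency relation. -/

import Mathlib

/-! The box has width `2^(j-1) ≤ 2^j = e^{j log 2}`, and since `α ≤ 1` gives `log 2 ≤ L`, both
heights exceed `jL ≥ j log 2`; hence `e^{(h+h')/2} ≥ e^{jL}` dominates the width. -/

open Real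

lemma log_two_le_mul_log_two {α : ℝ} (hα₀ : 0 < α) (hα₁ : α ≤ 1) :
    log 2 ≤ (α + 1) / (2 * α) * log 2 := by
  have hfactor : 1 ≤ (α + 1) / (2 * α) := by
    rw [le_div_iff₀ (by positivity)]
    linarith
  exact le_mul_of_one_le_left (log_nonneg one_le_two) hfactor

lemma two_pow_le_exp_half_add {L h h' : ℝ} (j : ℕ) (hL : log 2 ≤ L)
    (hh : j * L ≤ h) (hh' : j * L ≤ h') : (2 : ℝ) ^ j ≤ exp ((h + h') / 2) :=
  calc (2 : ℝ) ^ j = exp (j * log 2) := by rw [exp_nat_mul, exp_log two_pos]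
    _ ≤ exp (j * L) := exp_le_exp.2 (mul_le_mul_of_nonneg_left hL j.cast_nonneg)
    _ ≤ exp ((h + h') / 2) := exp_le_exp.2 (by linarith)

theorem stmt1_general (α L : ℝ) (hα : α ∈ Set.Ioo (1/2 : ℝ) 1)
    (hL : L = ((α + 1) / (2 * α)) * Real.log 2)
    (j k : ℕ) (x h x' h' : ℝ)
    (hx : x ∈ Set.Ioo ((2:ℝ)^(j-1) * k) ((2:ℝ)^(j-1) * (k+1)))
    (hh : h ∈ Set.Ioo ((j:ℝ) * L) (((j:ℝ)+1) * L))
    (hx' : x' ∈ Set.Ioo ((2:ℝ)^(j-1) * k) ((2:ℝ)^(j-1) * (k+1)))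
    (hh' : h' ∈ Set.Ioo ((j:ℝ) * L) (((j:ℝ)+1) * L)) :
    |x - x'| ≤ Real.exp ((h + h') / 2) := by
  have hwidth : |x - x'| ≤ (2 : ℝ) ^ (j - 1) := by
    have := Real.dist_le_of_mem_Icc (Set.Ioo_subset_Icc_self hx) (Set.Ioo_subset_Icc_self hx')
    rwa [Real.dist_eq, mul_add, mul_one, add_sub_cancel_left] at this
  have hlog : log 2 ≤ L := hL ▸ log_two_le_mul_log_two (by linarith [hα.1]) hα.2.le
  calc |x - x'| ≤ (2 : ℝ) ^ (j - 1) := hwidth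
    _ ≤ (2 : ℝ) ^ j := pow_le_pow_right₀ one_le_two (Nat.sub_le j 1)
    _ ≤ exp ((h + h') / 2) := two_pow_le_exp_half_add j hlog hh.1.le hh'.1.le

theorem stmt1 (α L : ℝ) (hα : α ∈ Set.Ioo (1/2 : ℝ) 1)
    (hL : L = ((α + 1) / (2 * α)) * Real.log 2)
    (j k : ℕ) (hj : 1 ≤ j) (x h x' h' : ℝ)
    (hx : x ∈ Set.Ioo ((2:ℝ)^(j-1) * k) ((2:ℝ)^(j-1) * (k+1)))
    (hh : h ∈ Set.Ioo ((j:ℝ) * L) (((j:ℝ)+1) * L))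
    (hx' : x' ∈ Set.Ioo ((2:ℝ)^(j-1) * k) ((2:ℝ)^(j-1) * (k+1)))
    (hh' : h' ∈ Set.Ioo ((j:ℝ) * L) (((j:ℝ)+1) * L)) :
    |x - x'| ≤ Real.exp ((h + h') / 2) :=
  stmt1_general α L hα hL j k x h x' h' hx hh hx' hh'
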